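/- Let Y be as above (paths right continuous, continuous up to lifetime ζ, state space a separable metric space E), let (S_{n-1}) be an F^Y-stopping time, and let K_{n-1} = Y(S_{n-1}) on {S_{n-1} < ∞}. If V_c ⊆ E is finite, then S_n = inf{ t ≥ S_{n-1} : Y(t) ∈ V_c \ {K_{n-1}} } is again an F^Y-stopping time. -/

import Mathlib

open scoped ENNReal

/-- The σ-algebra on `E ∪ {Δ}`: a set is measurable iff its trace on `E` is. -/
instance optionMeasurableSpace {E : Type*} [MeasurableSpace E] :
    MeasurableSpace (Option E) :=
  MeasurableSpace.map some inferInstance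

/-- The natural filtration of the process `Y`. -/
def natFilt {Ω E : Type*} [MeasurableSpace E] (Y : ℝ → Ω → Option E) (t : ℝ) :
    MeasurableSpace Ω :=
  ⨆ (u : ℝ) (_ : 0 ≤ u ∧ u ≤ t), MeasurableSpace.comap (fun ω => Y u ω) inferInstance

/-!
On `{τ ≤ t}` put `σ = min τ t`. Before the lifetime the paths are continuous, so the infimum
defining `S` over the closed (indeed finite) set `V_c \ {K}` is attained: `S ≤ t` iff for some
`a ∈ V_c` the path visits `a` during `[σ, t]` and `Y σ ≠ a`. Both conditions are read off the
path at countably many times. A visit to `a` is witnessed by rational times `q ≤ r` with `Y q`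
arbitrarily close to `a`, where `r` is a rational time (or `t`) at which the path is still alive;
and `Y σ = a` iff `Y q → a` along rational `q ↓ σ`. Finally `σ` is `F_t`-measurable because `τ`
is a stopping time.
-/

open Set Filter Topology MeasureTheory

def ratTimes (t : ℝ) : Set ℝ := Icc 0 t ∩ insert t (range ((↑) : ℚ → ℝ))

lemma countable_ratTimes (t : ℝ) : (ratTimes t).Countable :=
  ((countable_range _).insert t).mono inter_subset_right

lemma ratTimes_subset_Icc (t : ℝ) : ratTimes t ⊆ Icc 0 t := inter_subset_left

lemma self_mem_ratTimes {t : ℝ} (ht : 0 ≤ t) : t ∈ ratTimes t :=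
  ⟨⟨ht, le_rfl⟩, mem_insert t _⟩

lemma ratCast_mem_ratTimes {t : ℝ} {q : ℚ} (h0 : 0 ≤ (q : ℝ)) (ht : (q : ℝ) ≤ t) :
    (q : ℝ) ∈ ratTimes t :=
  ⟨⟨h0, ht⟩, mem_insert_of_mem _ ⟨q, rfl⟩⟩

lemma tendsto_add_one_div_add_one (c : ℝ) :
    Tendsto (fun n : ℕ => c + 1 / ((n : ℝ) + 1)) atTop (𝓝 c) := by
  simpa using tendsto_const_nhds.add (tendsto_one_div_add_atTop_nhds_zero_nat (𝕜 := ℝ))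

def lifeSpan (z : ℝ≥0∞) : Set ℝ := {s | 0 ≤ s ∧ ENNReal.ofReal s < z}

lemma mem_lifeSpan_of_le {z : ℝ≥0∞} {r s : ℝ} (hr : r ∈ lifeSpan z) (h0 : 0 ≤ s)
    (hs : s ≤ r) : s ∈ lifeSpan z :=
  ⟨h0, (ENNReal.ofReal_le_ofReal hs).trans_lt hr.2⟩

lemma lifeSpan_mem_nhdsGT {z : ℝ≥0∞} {s : ℝ} (hs : s ∈ lifeSpan z) :
    lifeSpan z ∈ 𝓝[>] s := by
  have hopen : IsOpen {r : ℝ | ENNReal.ofReal r < z} :=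
    isOpen_lt ENNReal.continuous_ofReal continuous_const
  exact inter_mem (mem_of_superset self_mem_nhdsWithin fun r hr => hs.1.trans (le_of_lt hr))
    (mem_nhdsWithin_of_mem_nhds (hopen.mem_nhds hs.2))

structure IsContinuousUpToLifetime {E : Type*} [TopologicalSpace E]
    (g : ℝ → Option E) (f : ℝ → E) (z : ℝ≥0∞) : Prop where
  eq_some : ∀ s ∈ lifeSpan z, g s = some (f s)
  eq_none : ∀ s ∉ lifeSpan z, g s = none
  continuousOn : ContinuousOn f (lifeSpan z)

noncomputable def hitTime {E : Type*} (g : ℝ → Option E) (c : ℝ≥0∞) (B : Set E) : ℝ≥0∞ :=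
  ⨅ (s : ℝ) (_ : 0 ≤ s ∧ c ≤ ENNReal.ofReal s ∧ ∃ a ∈ B, g s = some a), ENNReal.ofReal s

namespace IsContinuousUpToLifetime

variable {E : Type*} [MetricSpace E] {g : ℝ → Option E} {f : ℝ → E} {z : ℝ≥0∞}

lemma mem_lifeSpan_of_eq_some (hg : IsContinuousUpToLifetime g f z) {s : ℝ} {b : E}
    (h : g s = some b) : s ∈ lifeSpan z ∧ f s = b := by
  by_cases hs : s ∈ lifeSpan z
  · exact ⟨hs, Option.some_injective _ ((hg.eq_some s hs).symm.trans h)⟩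
  · simp [hg.eq_none s hs] at h

lemma ne_none_iff (hg : IsContinuousUpToLifetime g f z) {s : ℝ} :
    g s ≠ none ↔ s ∈ lifeSpan z :=
  ⟨fun h => (hg.mem_lifeSpan_of_eq_some (Option.ne_none_iff_exists'.1 h).choose_spec).1,
    fun hs => by simp [hg.eq_some s hs]⟩

lemma tendsto_comp (hg : IsContinuousUpToLifetime g f z) {ι : Type*} {l : Filter ι}
    {q : ι → ℝ} {s : ℝ} (hq : Tendsto q l (𝓝 s)) (hs : s ∈ lifeSpan z)
    (hql : ∀ᶠ i in l, q i ∈ lifeSpan z) : Tendsto (f ∘ q) l (𝓝 (f s)) :=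
  (hg.continuousOn s hs).tendsto.comp (tendsto_nhdsWithin_iff.2 ⟨hq, hql⟩)

lemma eq_some_of_tendsto (hg : IsContinuousUpToLifetime g f z) {ι : Type*} {l : Filter ι}
    [l.NeBot] {q r : ι → ℝ} {s : ℝ} {a : E} (hq : Tendsto q l (𝓝 s)) (hs : s ∈ lifeSpan z)
    (hr : Tendsto r l (𝓝 0)) (hqa : ∀ i, g (q i) ∈ some '' Metric.ball a (r i)) :
    g s = some a := by
  have hlife (i : ι) : q i ∈ lifeSpan z ∧ dist (f (q i)) a < r i := by
    obtain ⟨b, hb, hgb⟩ := hqa i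
    obtain ⟨hqi, rfl⟩ := hg.mem_lifeSpan_of_eq_some hgb.symm
    exact ⟨hqi, hb⟩
  have hfa : Tendsto (f ∘ q) l (𝓝 a) := tendsto_iff_dist_tendsto_zero.2 <|
    squeeze_zero (fun _ => dist_nonneg) (fun i => (hlife i).2.le) hr
  have hfs := hg.tendsto_comp hq hs (.of_forall fun i => (hlife i).1)
  rw [hg.eq_some s hs, tendsto_nhds_unique hfs hfa]

lemma exists_ratTimes_mem_ball (hg : IsContinuousUpToLifetime g f z) {s t ε δ : ℝ} {a : E}
    (hs : g s = some a) (hst : s ≤ t) (hε : 0 < ε) (hδ : 0 < δ) :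
    ∃ q ∈ ratTimes t, s ≤ q ∧ q < s + δ ∧ g q ∈ some '' Metric.ball a ε := by
  obtain ⟨hs_life, rfl⟩ := hg.mem_lifeSpan_of_eq_some hs
  rcases hst.eq_or_lt with rfl | hst
  · exact ⟨s, self_mem_ratTimes hs_life.1, le_rfl, by linarith, f s,
      Metric.mem_ball_self hε, hs.symm⟩
  have hf : ∀ᶠ q in 𝓝[>] s, f q ∈ Metric.ball (f s) ε :=
    ((hg.continuousOn s hs_life).mono_of_mem_nhdsWithin (lifeSpan_mem_nhdsGT hs_life)).tendsto
      (Metric.ball_mem_nhds _ hε)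
  have hnear : ∀ᶠ q in 𝓝[>] s, q < t ∧ q < s + δ :=
    nhdsWithin_le_nhds ((gt_mem_nhds hst).and (gt_mem_nhds (by linarith)))
  obtain ⟨u, hsu, hu⟩ := mem_nhdsGT_iff_exists_Ioo_subset.1
    (hf.and (hnear.and (lifeSpan_mem_nhdsGT hs_life)))
  obtain ⟨q, hsq, hqu⟩ := exists_rat_btwn (show s < u from hsu)
  obtain ⟨hfq, ⟨hqt, hqδ⟩, hq_life⟩ := hu ⟨hsq, hqu⟩
  exact ⟨q, ratCast_mem_ratTimes (hs_life.1.trans hsq.le) hqt.le, hsq.le, hqδ,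
    f q, hfq, (hg.eq_some q hq_life).symm⟩

theorem hitTime_le_ofReal_iff (hg : IsContinuousUpToLifetime g f z) {B : Set E}
    (hB : IsClosed B) (c : ℝ≥0∞) {t : ℝ} (ht : 0 ≤ t) :
    hitTime g c B ≤ ENNReal.ofReal t ↔
      ∃ s, 0 ≤ s ∧ s ≤ t ∧ c ≤ ENNReal.ofReal s ∧ ∃ a ∈ B, g s = some a := by
  refine ⟨fun h => ?_, fun ⟨s, h0, hst, hcs, hsB⟩ =>
    (iInf₂_le s ⟨h0, hcs, hsB⟩).trans (ENNReal.ofReal_le_ofReal hst)⟩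
  have happrox (n : ℕ) : ∃ s, (0 ≤ s ∧ c ≤ ENNReal.ofReal s ∧ ∃ a ∈ B, g s = some a) ∧
      s < t + 1 / (n + 1) := by
    have hpos : (0 : ℝ) < 1 / (n + 1) := by positivity
    have hlt := h.trans_lt (ENNReal.lt_add_right ENNReal.ofReal_ne_top
      (ENNReal.ofReal_pos.2 hpos).ne')
    rw [← ENNReal.ofReal_add ht hpos.le] at hlt
    obtain ⟨s, hs⟩ := iInf_lt_iff.1 hlt
    obtain ⟨hsH, hst⟩ := iInf_lt_iff.1 hs
    exact ⟨s, hsH, (ENNReal.ofReal_lt_ofReal_iff'.1 hst).1⟩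
  choose s hs hst using happrox
  by_cases hle : ∃ n, s n ≤ t
  · obtain ⟨n, hn⟩ := hle
    exact ⟨s n, (hs n).1, hn, (hs n).2⟩
  simp only [not_exists, not_le] at hle
  -- Otherwise the hits `s n` decrease to `t` and all lie before the lifetime, so by continuity
  -- and closedness of `B` the time `t` is itself a hit.
  have hlim : Tendsto s atTop (𝓝 t) := tendsto_of_tendsto_of_tendsto_of_le_of_le
    tendsto_const_nhds (tendsto_add_one_div_add_one t) (fun n => (hle n).le) fun n => (hst n).le
  have hlife (n : ℕ) : s n ∈ lifeSpan z ∧ f (s n) ∈ B := by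
    obtain ⟨a, ha, hga⟩ := (hs n).2.2
    obtain ⟨hsn, rfl⟩ := hg.mem_lifeSpan_of_eq_some hga
    exact ⟨hsn, ha⟩
  have ht_life : t ∈ lifeSpan z := mem_lifeSpan_of_le (hlife 0).1 ht (hle 0).le
  have hfB : f t ∈ B := hB.mem_of_tendsto
    (hg.tendsto_comp hlim ht_life (.of_forall fun n => (hlife n).1))
    (.of_forall fun n => (hlife n).2)
  have hct : c ≤ ENNReal.ofReal t := ge_of_tendsto
    ((ENNReal.continuous_ofReal.tendsto t).comp hlim) (.of_forall fun n => (hs n).2.1)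
  exact ⟨t, ht, le_rfl, hct, f t, hfB, hg.eq_some t ht_life⟩

theorem hitTime_sep_ne_le_ofReal_iff (hg : IsContinuousUpToLifetime g f z) {V : Set E}
    (hV : V.Finite) (c : ℝ≥0∞) (k : Option E) {t : ℝ} (ht : 0 ≤ t) :
    hitTime g c {a | a ∈ V ∧ some a ≠ k} ≤ ENNReal.ofReal t ↔ c ≤ ENNReal.ofReal t ∧
      ∃ a ∈ V, (∃ s ≤ t, c.toReal ≤ s ∧ g s = some a) ∧ some a ≠ k := by
  rw [hg.hitTime_le_ofReal_iff (hV.subset (sep_subset _ _)).isClosed c ht]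
  constructor
  · rintro ⟨s, hs0, hst, hcs, a, ⟨haV, hak⟩, hga⟩
    have hct : c ≤ ENNReal.ofReal t := hcs.trans (ENNReal.ofReal_le_ofReal hst)
    exact ⟨hct, a, haV, ⟨s, hst, ENNReal.toReal_le_of_le_ofReal hs0 hcs, hga⟩, hak⟩
  · rintro ⟨hct, a, haV, ⟨s, hst, hcs, hga⟩, hak⟩
    have hs0 : 0 ≤ s := ENNReal.toReal_nonneg.trans hcs
    have hc : c ≠ ⊤ := ne_top_of_le_ne_top ENNReal.ofReal_ne_top hct
    exact ⟨s, hs0, hst, (ENNReal.le_ofReal_iff_toReal_le hc hs0).2 hcs, a, ⟨haV, hak⟩, hga⟩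

theorem exists_hit_iff (hg : IsContinuousUpToLifetime g f z) {c t : ℝ} {a : E} :
    (∃ s ≤ t, c ≤ s ∧ g s = some a) ↔ ∃ r ∈ ratTimes t, g r ≠ none ∧
      ∀ n : ℕ, ∃ q ∈ ratTimes r, c ≤ q ∧ g q ∈ some '' Metric.ball a (1 / (n + 1)) := by
  constructor
  · rintro ⟨s, hst, hcs, hs⟩
    obtain ⟨r, hr, hsr, -, b, -, hgr⟩ := hg.exists_ratTimes_mem_ball hs hst one_pos one_pos
    refine ⟨r, hr, by simp [← hgr], fun n => ?_⟩
    obtain ⟨q, hq, hsq, -, hqa⟩ :=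
      hg.exists_ratTimes_mem_ball (ε := 1 / (n + 1)) hs hsr (by positivity) one_pos
    exact ⟨q, hq, hcs.trans hsq, hqa⟩
  · rintro ⟨r, hr, hr_none, hq⟩
    choose q hqr hcq hqa using hq
    obtain ⟨s, hs, φ, hφ, hlim⟩ :=
      isCompact_Icc.tendsto_subseq fun n => ratTimes_subset_Icc r (hqr n)
    have hs_life : s ∈ lifeSpan z := mem_lifeSpan_of_le (hg.ne_none_iff.1 hr_none) hs.1 hs.2
    exact ⟨s, hs.2.trans (ratTimes_subset_Icc t hr).2,
      ge_of_tendsto hlim (.of_forall fun n => hcq (φ n)),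
      hg.eq_some_of_tendsto hlim hs_life
        (tendsto_one_div_add_atTop_nhds_zero_nat.comp hφ.tendsto_atTop) fun n => hqa (φ n)⟩

theorem eq_some_iff_ratTimes (hg : IsContinuousUpToLifetime g f z) {c t : ℝ} {a : E}
    (hc : 0 ≤ c) (hct : c ≤ t) :
    g c = some a ↔ ∀ n : ℕ, ∃ q ∈ ratTimes t, c ≤ q ∧ q ≤ c + 1 / (n + 1) ∧
      g q ∈ some '' Metric.ball a (1 / (n + 1)) := by
  constructor
  · intro hca n
    obtain ⟨q, hq, hcq, hqc, hqa⟩ :=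
      hg.exists_ratTimes_mem_ball (ε := 1 / (n + 1)) (δ := 1 / (n + 1)) hca hct
        (by positivity) (by positivity)
    exact ⟨q, hq, hcq, hqc.le, hqa⟩
  · intro h
    choose q hqt hcq hqc hqa using h
    have hlim : Tendsto q atTop (𝓝 c) := tendsto_of_tendsto_of_tendsto_of_le_of_le
      tendsto_const_nhds (tendsto_add_one_div_add_one c) hcq hqc
    obtain ⟨b, -, hgb⟩ := hqa 0
    have hc_life := mem_lifeSpan_of_le (hg.mem_lifeSpan_of_eq_some hgb.symm).1 hc (hcq 0)
    exact hg.eq_some_of_tendsto hlim hc_life tendsto_one_div_add_atTop_nhds_zero_nat hqa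

end IsContinuousUpToLifetime

lemma measurable_toReal_min {Ω : Type*} {F : ℝ → MeasurableSpace Ω} (hF : Monotone F)
    {τ : Ω → ℝ≥0∞} (hτ : ∀ s, 0 ≤ s → MeasurableSet[F s] {ω | τ ω ≤ ENNReal.ofReal s})
    {t : ℝ} (ht : 0 ≤ t) :
    Measurable[F t] fun ω => (min (τ ω) (ENNReal.ofReal t)).toReal := by
  refine ENNReal.measurable_toReal.comp (measurable_of_Iic fun x => ?_)
  rcases le_or_gt (ENNReal.ofReal t) x with htx | hxt
  · convert MeasurableSet.univ
    exact eq_univ_of_forall fun ω => min_le_of_right_le htx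
  · have hpre : (fun ω => min (τ ω) (ENNReal.ofReal t)) ⁻¹' Iic x =
        {ω | τ ω ≤ ENNReal.ofReal x.toReal} := by
      ext ω
      simp [hxt.not_ge, ENNReal.ofReal_toReal hxt.ne_top]
    rw [hpre]
    exact hF (ENNReal.toReal_le_of_le_ofReal ht hxt.le) _ (hτ _ ENNReal.toReal_nonneg)

section natFilt

variable {Ω E : Type*} [MeasurableSpace E]

lemma natFilt_mono (Y : ℝ → Ω → Option E) : Monotone (natFilt Y) := fun _ t h =>
  iSup₂_le fun u hu => le_iSup₂ (f := fun (u : ℝ) (_ : 0 ≤ u ∧ u ≤ t) =>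
    MeasurableSpace.comap (fun ω => Y u ω) inferInstance) u ⟨hu.1, hu.2.trans h⟩

lemma measurableSet_natFilt_preimage (Y : ℝ → Ω → Option E) {t u : ℝ} (hu : u ∈ Icc 0 t)
    {A : Set (Option E)} (hA : MeasurableSet A) :
    MeasurableSet[natFilt Y t] {ω | Y u ω ∈ A} :=
  le_iSup₂ (f := fun (u : ℝ) (_ : 0 ≤ u ∧ u ≤ t) =>
    MeasurableSpace.comap (fun ω => Y u ω) inferInstance) u hu _ ⟨A, hA, rfl⟩

lemma measurableSet_image_some {B : Set E} (hB : MeasurableSet B) :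
    MeasurableSet (some '' B : Set (Option E)) := by
  change MeasurableSet (some ⁻¹' (some '' B))
  rwa [preimage_image_eq _ (Option.some_injective E)]

lemma measurableSet_ne_none : MeasurableSet {x : Option E | x ≠ none} := by
  change MeasurableSet (some ⁻¹' {x : Option E | x ≠ none})
  simp

variable [MetricSpace E] [OpensMeasurableSpace E] {Y : ℝ → Ω → Option E} {p : Ω → ℝ → E}
  {ζ : Ω → ℝ≥0∞} {t : ℝ} {σ : Ω → ℝ}

lemma measurableSet_natFilt_exists_hit
    (hY : ∀ ω, IsContinuousUpToLifetime (fun s => Y s ω) (p ω) (ζ ω))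
    (hσ : Measurable[natFilt Y t] σ) (a : E) :
    MeasurableSet[natFilt Y t] {ω | ∃ s ≤ t, σ ω ≤ s ∧ Y s ω = some a} := by
  have hset : {ω | ∃ s ≤ t, σ ω ≤ s ∧ Y s ω = some a} = ⋃ r ∈ ratTimes t,
      {ω | Y r ω ∈ {x | x ≠ none}} ∩ ⋂ n : ℕ, ⋃ q ∈ ratTimes r,
        {ω | σ ω ≤ q} ∩ {ω | Y q ω ∈ some '' Metric.ball a (1 / (n + 1))} := by
    ext ω
    simp only [mem_ofPred_eq, mem_iUnion, mem_iInter, mem_inter_iff, exists_prop,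
      (hY ω).exists_hit_iff]
  rw [hset]
  refine .biUnion (countable_ratTimes t) fun r hr => .inter
    (measurableSet_natFilt_preimage Y (ratTimes_subset_Icc t hr) measurableSet_ne_none)
    (.iInter fun n => .biUnion (countable_ratTimes r) fun q hq => .inter
      (measurableSet_le hσ measurable_const) ?_)
  have hqt : q ∈ Icc 0 t := ⟨(ratTimes_subset_Icc r hq).1,
    (ratTimes_subset_Icc r hq).2.trans (ratTimes_subset_Icc t hr).2⟩
  exact measurableSet_natFilt_preimage Y hqt (measurableSet_image_some measurableSet_ball)

lemma measurableSet_natFilt_eq_some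
    (hY : ∀ ω, IsContinuousUpToLifetime (fun s => Y s ω) (p ω) (ζ ω))
    (hσ : Measurable[natFilt Y t] σ) (hσt : ∀ ω, σ ω ∈ Icc 0 t) (a : E) :
    MeasurableSet[natFilt Y t] {ω | Y (σ ω) ω = some a} := by
  have hset : {ω | Y (σ ω) ω = some a} = ⋂ n : ℕ, ⋃ q ∈ ratTimes t,
      {ω | σ ω ≤ q} ∩ {ω | q ≤ σ ω + 1 / (n + 1)} ∩
        {ω | Y q ω ∈ some '' Metric.ball a (1 / (n + 1))} := by
    ext ω
    simp only [mem_ofPred_eq, mem_iUnion, mem_iInter, mem_inter_iff, exists_prop, and_assoc,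
      (hY ω).eq_some_iff_ratTimes (hσt ω).1 (hσt ω).2]
  rw [hset]
  exact .iInter fun n => .biUnion (countable_ratTimes t) fun q hq =>
    ((measurableSet_le hσ measurable_const).inter
      (measurableSet_le measurable_const (hσ.add_const _))).inter
    (measurableSet_natFilt_preimage Y (ratTimes_subset_Icc t hq)
      (measurableSet_image_some measurableSet_ball))

end natFilt

theorem stmt11_general {Ω E : Type*} [MetricSpace E]
    [MeasurableSpace E] [BorelSpace E]
    (p : Ω → ℝ → E) (ζ : Ω → ℝ≥0∞) (Y : ℝ → Ω → Option E)
    (hYlt : ∀ ω, ∀ t : ℝ, 0 ≤ t → ENNReal.ofReal t < ζ ω → Y t ω = some (p ω t))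
    (hYge : ∀ ω, ∀ t : ℝ, 0 ≤ t → ζ ω ≤ ENNReal.ofReal t → Y t ω = none)
    (hYneg : ∀ ω, ∀ t : ℝ, t < 0 → Y t ω = none)
    (hcont : ∀ ω, ContinuousOn (p ω) {t : ℝ | 0 ≤ t ∧ ENNReal.ofReal t < ζ ω})
    (Vc : Set E) (hVc : Vc.Finite)
    (τ : Ω → ℝ≥0∞)
    (hτ : ∀ t : ℝ, 0 ≤ t → @MeasurableSet Ω (natFilt Y t) {ω | τ ω ≤ ENNReal.ofReal t})
    (K : Ω → Option E)
    (hK : ∀ ω, K ω = if τ ω = ⊤ then none else Y (τ ω).toReal ω)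
    (S : Ω → ℝ≥0∞)
    (hS : ∀ ω, S ω = ⨅ (t : ℝ)
      (_ : 0 ≤ t ∧ τ ω ≤ ENNReal.ofReal t ∧
        ∃ a ∈ Vc, Y t ω = some a ∧ some a ≠ K ω), ENNReal.ofReal t) :
    ∀ t : ℝ, 0 ≤ t → @MeasurableSet Ω (natFilt Y t) {ω | S ω ≤ ENNReal.ofReal t} := by
  intro t ht
  have hY (ω : Ω) : IsContinuousUpToLifetime (fun s => Y s ω) (p ω) (ζ ω) := by
    refine ⟨fun s hs => hYlt ω s hs.1 hs.2, fun s hs => ?_, hcont ω⟩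
    rcases lt_or_ge s 0 with hs0 | hs0
    · exact hYneg ω s hs0
    · exact hYge ω s hs0 (not_lt.1 fun hsz => hs ⟨hs0, hsz⟩)
  set σ : Ω → ℝ := fun ω => (min (τ ω) (ENNReal.ofReal t)).toReal
  have hS_eq (ω : Ω) : S ω = hitTime (fun s => Y s ω) (τ ω) {a | a ∈ Vc ∧ some a ≠ K ω} := by
    rw [hS ω, hitTime]
    exact iInf_congr fun s => iInf_congr_Prop (by simp only [mem_ofPred_eq]; tauto) fun _ => rfl
  have hset : {ω | S ω ≤ ENNReal.ofReal t} = {ω | τ ω ≤ ENNReal.ofReal t} ∩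
      ⋃ a ∈ Vc, {ω | ∃ s ≤ t, σ ω ≤ s ∧ Y s ω = some a} \ {ω | Y (σ ω) ω = some a} := by
    ext ω
    simp only [mem_ofPred_eq, hS_eq, (hY ω).hitTime_sep_ne_le_ofReal_iff hVc _ _ ht,
      mem_inter_iff, mem_iUnion, Set.mem_sdiff, exists_prop]
    refine and_congr_right fun hτt => ?_
    rw [hK ω, if_neg (ne_top_of_le_ne_top ENNReal.ofReal_ne_top hτt)]
    simp only [σ, min_eq_left hτt, ne_comm]
  have hσ : Measurable[natFilt Y t] σ := measurable_toReal_min (natFilt_mono Y) hτ ht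
  have hσt (ω : Ω) : σ ω ∈ Icc 0 t :=
    ⟨ENNReal.toReal_nonneg, ENNReal.toReal_le_of_le_ofReal ht (min_le_right _ _)⟩
  rw [hset]
  exact (hτ t ht).inter (.biUnion hVc.countable fun a _ =>
    (measurableSet_natFilt_exists_hit hY hσ a).diff (measurableSet_natFilt_eq_some hY hσ hσt a))

/-- If `τ` is a stopping time of the natural filtration of `Y` (a process with
paths continuous up to the lifetime, values in a separable metric space plus
cemetery), `K = Y(τ)`, and `V_c` is finite, then the hitting time after `τ` of
`V_c \ {K}` is again a stopping time of the natural filtration of `Y`. -/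
theorem stmt11 {Ω E : Type*} [MetricSpace E] [TopologicalSpace.SeparableSpace E]
    [MeasurableSpace E] [BorelSpace E]
    (p : Ω → ℝ → E) (ζ : Ω → ℝ≥0∞) (Y : ℝ → Ω → Option E)
    (hYlt : ∀ ω, ∀ t : ℝ, 0 ≤ t → ENNReal.ofReal t < ζ ω → Y t ω = some (p ω t))
    (hYge : ∀ ω, ∀ t : ℝ, 0 ≤ t → ζ ω ≤ ENNReal.ofReal t → Y t ω = none)
    (hYneg : ∀ ω, ∀ t : ℝ, t < 0 → Y t ω = none)
    (hcont : ∀ ω, ContinuousOn (p ω) {t : ℝ | 0 ≤ t ∧ ENNReal.ofReal t < ζ ω})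
    (Vc : Set E) (hVc : Vc.Finite)
    (τ : Ω → ℝ≥0∞)
    (hτ : ∀ t : ℝ, 0 ≤ t → @MeasurableSet Ω (natFilt Y t) {ω | τ ω ≤ ENNReal.ofReal t})
    (K : Ω → Option E)
    (hK : ∀ ω, K ω = if τ ω = ⊤ then none else Y (τ ω).toReal ω)
    (S : Ω → ℝ≥0∞)
    (hS : ∀ ω, S ω = ⨅ (t : ℝ)
      (_ : 0 ≤ t ∧ τ ω ≤ ENNReal.ofReal t ∧
        ∃ a ∈ Vc, Y t ω = some a ∧ some a ≠ K ω), ENNReal.ofReal t) :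
    ∀ t : ℝ, 0 ≤ t → @MeasurableSet Ω (natFilt Y t) {ω | S ω ≤ ENNReal.ofReal t} :=
  stmt11_general p ζ Y hYlt hYge hYneg hcont Vc hVc τ hτ K hK S hS
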